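/- arXiv:1409.6150 — 2 statements merged into one kernel-verified Lean document; each statement's English description precedes it below -/
import Mathlib

section
/- Let f, g : ℝ^n × U → ℝ^n and suppose x(t), y(t) : [0,T] → ℝ^n are C¹ solutions of ẋ = f(x, u₁(t)) and ẏ = g(y, u₂(t)) respectively, with x(0) ≤ y(0) componentwise. Assume g satisfies the strict Kamke condition relative to f: whenever a ≤ b componentwise with a_i = b_i for some coordinate i, and u₁(t) ≤ u₂(t), we have f_i(a, u₁(t)) < g_i(b, u₂(t)). Then x(t) ≤ y(t) componentwise for all t ∈ [0,T]. -/
open Topology Filter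


/-- Strict comparison principle for control systems under the strict Kamke
condition: if `x` solves `ẋ = f(x,u₁)`, `y` solves `ẏ = g(y,u₂)`, `x 0 ≤ y 0`,
`u₁ ≤ u₂` pointwise, and whenever `a ≤ b` with `a i = b i` we have
`f i (a,u₁ t) < g i (b,u₂ t)`, then `x t ≤ y t` on `[0,T]`. -/
theorem strict_kamke_comparison (n m : ℕ) (T : ℝ) (hT : 0 ≤ T)
    (f g : (Fin n → ℝ) → (Fin m → ℝ) → (Fin n → ℝ))
    (u₁ u₂ : ℝ → (Fin m → ℝ))
    (hu : ∀ t ∈ Set.Icc (0:ℝ) T, u₁ t ≤ u₂ t)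
    (x y : ℝ → (Fin n → ℝ))
    (hx : ∀ t ∈ Set.Icc (0:ℝ) T, HasDerivAt x (f (x t) (u₁ t)) t)
    (hy : ∀ t ∈ Set.Icc (0:ℝ) T, HasDerivAt y (g (y t) (u₂ t)) t)
    (hx0 : x 0 ≤ y 0)
    (hkamke : ∀ t ∈ Set.Icc (0:ℝ) T, ∀ a b : Fin n → ℝ, a ≤ b →
      ∀ i : Fin n, a i = b i → f a (u₁ t) i < g b (u₂ t) i) :
    ∀ t ∈ Set.Icc (0:ℝ) T, x t ≤ y t := by
  by_contra hcon
  push_neg at hcon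
  obtain ⟨t₀, ht₀, ht₀bad⟩ := hcon
  set S : Set ℝ := {t | t ∈ Set.Icc (0:ℝ) T ∧ ¬ x t ≤ y t} with hSdef
  have hSne : S.Nonempty := ⟨t₀, ht₀, ht₀bad⟩
  have hSbdd : BddBelow S := ⟨0, fun s hs => hs.1.1⟩
  set c := sInf S with hc
  have hc0 : 0 ≤ c := le_csInf hSne fun s hs => hs.1.1
  have hcT : c ≤ T := le_trans (csInf_le hSbdd hSne.choose_spec) hSne.choose_spec.1.2
  have hcIcc : c ∈ Set.Icc (0:ℝ) T := ⟨hc0, hcT⟩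
  -- below c everything is fine
  have hbelow : ∀ s, 0 ≤ s → s < c → x s ≤ y s := by
    intro s hs0 hsc
    by_contra hbad
    exact absurd (csInf_le hSbdd ⟨⟨hs0, hsc.le.trans hcT⟩, hbad⟩) (not_le.mpr hsc)
  -- coordinate derivatives
  have hxd : ∀ i, HasDerivAt (fun t => x t i) (f (x c) (u₁ c) i) c :=
    hasDerivAt_pi.1 (hx c hcIcc)
  have hyd : ∀ i, HasDerivAt (fun t => y t i) (g (y c) (u₂ c) i) c :=
    hasDerivAt_pi.1 (hy c hcIcc)
  have hcontx : ∀ i, ContinuousAt (fun t => y t i - x t i) c :=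
    fun i => ((hyd i).continuousAt).sub ((hxd i).continuousAt)
  -- x c ≤ y c
  have hcle : x c ≤ y c := by
    rcases eq_or_lt_of_le hc0 with h0 | h0
    · simpa [← h0] using hx0
    · intro i
      have hne : (Set.Ico (0:ℝ) c).Nonempty := ⟨0, le_refl 0, h0⟩
      have hmem : c ∈ closure (Set.Ico (0:ℝ) c) := by
        rw [closure_Ico (ne_of_lt h0)]; exact ⟨hc0, le_refl c⟩
      have hnb : (𝓝[Set.Ico (0:ℝ) c] c).NeBot :=
        mem_closure_iff_nhdsWithin_neBot.1 hmem
      have htend : Filter.Tendsto (fun t => y t i - x t i)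
          (𝓝[Set.Ico (0:ℝ) c] c) (𝓝 (y c i - x c i)) :=
        ((hcontx i).continuousWithinAt)
      have hev : ∀ᶠ t in 𝓝[Set.Ico (0:ℝ) c] c, 0 ≤ y t i - x t i := by
        filter_upwards [self_mem_nhdsWithin] with t ht
        exact sub_nonneg.2 (hbelow t ht.1 ht.2 i)
      exact sub_nonneg.1 (ge_of_tendsto htend hev)
  -- for each coordinate, eventually positive to the right of c
  have hpos : ∀ i : Fin n, ∀ᶠ t in 𝓝[>] c, 0 < y t i - x t i := by
    intro i
    rcases lt_or_eq_of_le (hcle i) with hlt | heq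
    · have h0 : (0:ℝ) < y c i - x c i := sub_pos.2 hlt
      have := (hcontx i).eventually_mem (Ioi_mem_nhds h0)
      exact (this.filter_mono nhdsWithin_le_nhds)
    · -- Kamke condition gives strictly positive derivative
      have hd : HasDerivAt (fun t => y t i - x t i)
          (g (y c) (u₂ c) i - f (x c) (u₁ c) i) c := (hyd i).sub (hxd i)
      have hdpos : 0 < g (y c) (u₂ c) i - f (x c) (u₁ c) i :=
        sub_pos.2 (hkamke c hcIcc (x c) (y c) hcle i heq)
      have hslope := hasDerivAt_iff_tendsto_slope.1 hd
      have hev : ∀ᶠ t in 𝓝[≠] c, 0 < slope (fun t => y t i - x t i) c t :=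
        hslope.eventually (eventually_gt_nhds hdpos)
      have hev' : ∀ᶠ t in 𝓝[>] c, 0 < slope (fun t => y t i - x t i) c t :=
        hev.filter_mono (nhdsWithin_mono c fun t ht => ne_of_gt ht)
      filter_upwards [hev', self_mem_nhdsWithin] with t hts htmem
      have htc : 0 < t - c := sub_pos.2 htmem
      have h1 : 0 < slope (fun t => y t i - x t i) c t * (t - c) :=
        mul_pos hts htc
      have h2 : slope (fun t => y t i - x t i) c t * (t - c)
          = (y t i - x t i) - (y c i - x c i) := by
        rw [slope_def_field]
        field_simp
      have h3 : y c i - x c i = 0 := by rw [heq]; ring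
      rw [h2, h3, sub_zero] at h1
      exact h1
  have hall : ∀ᶠ t in 𝓝[>] c, ∀ i, 0 < y t i - x t i :=
    Filter.eventually_all.2 hpos
  rw [Filter.eventually_iff, mem_nhdsGT_iff_exists_Ioo_subset] at hall
  obtain ⟨u, hu', hsub⟩ := hall
  -- find a point of S in (c, u)
  have : ∃ s ∈ S, s < u := by
    by_contra hnone
    push_neg at hnone
    exact absurd (le_csInf hSne hnone) (not_le.mpr hu')
  obtain ⟨s, hsS, hsu⟩ := this
  have hcs : c ≤ s := csInf_le hSbdd hsS
  have hcned : c ≠ s := by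
    rintro rfl
    exact hsS.2 hcle
  have hsIoo : s ∈ Set.Ioo c u := ⟨lt_of_le_of_ne hcs hcned, hsu⟩
  have := hsub hsIoo
  exact hsS.2 fun i => le_of_lt (sub_pos.1 (this i))
end

section
/- Let g, f, r : ℝ^n → ℝ^n be vector fields with g(x) ≤ f(x) ≤ r(x) componentwise for all x, and let x_g, x_f, x_r : [0, ∞) → ℝ^n be solutions of ẋ = g(x), ẋ = f(x), ẋ = r(x) respectively with x_g(0) ≤ x_f(0) ≤ x_r(0). Assume g and r satisfy the Kamke–Müller condition (a ≤ b with a_i = b_i implies g_i(a) ≤ g_i(b), and similarly for r), and all solutions are unique and Lipschitz-continuous in initial data. Then x_g(t) ≤ x_f(t) ≤ x_r(t) for all t ≥ 0. -/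
open Set Filter Topology

/-- Key comparison lemma: an ε-perturbation / first-crossing argument. -/
lemma comparison_aux {n : ℕ} (p q : (Fin n → ℝ) → (Fin n → ℝ)) (C : ℝ) (hC : 0 ≤ C)
    (key : ∀ (a w : Fin n → ℝ) (ε : ℝ), 0 < ε → (∀ j, a j ≤ w j + ε) →
      ∀ i, a i = w i + ε → p a i ≤ q w i + C * ε)
    (x y : ℝ → (Fin n → ℝ))
    (hx : ∀ t ≥ (0:ℝ), HasDerivAt x (p (x t)) t)
    (hy : ∀ t ≥ (0:ℝ), HasDerivAt y (q (y t)) t)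
    (h0 : x 0 ≤ y 0) : ∀ t ≥ (0:ℝ), x t ≤ y t := by
  classical
  intro t ht i
  set K : ℝ := C + 1 with hKdef
  have hK : 0 < K := by positivity
  -- the ε-perturbed claim
  have claim : ∀ ε > (0:ℝ), ∀ s ∈ Icc (0:ℝ) t, ∀ j, x s j ≤ y s j + ε * Real.exp (K * s) := by
    intro ε hε
    by_contra hcon
    push_neg at hcon
    obtain ⟨s₀, hs₀, j₀, hj₀⟩ := hcon
    set φ : Fin n → ℝ → ℝ := fun j s => x s j - y s j - ε * Real.exp (K * s) with hφ
    set S : Fin n → Set ℝ := fun j => {s ∈ Icc (0:ℝ) t | 0 < φ j s} with hS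
    -- pick the component with the smallest first-crossing time
    have hSne : (Finset.univ.filter (fun j => (S j).Nonempty)).Nonempty := by
      refine ⟨j₀, ?_⟩
      simp only [Finset.mem_filter, Finset.mem_univ, true_and]
      exact ⟨s₀, hs₀, by simp [hφ]; linarith⟩
    obtain ⟨i₀, hi₀mem, hi₀min⟩ :=
      Finset.exists_min_image _ (fun j => sInf (S j)) hSne
    simp only [Finset.mem_filter, Finset.mem_univ, true_and] at hi₀mem
    set t₀ : ℝ := sInf (S i₀) with ht₀def
    have hbdd : ∀ j, BddBelow (S j) := fun j => ⟨0, fun s hs => hs.1.1⟩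
    have ht₀mem : t₀ ∈ Icc (0:ℝ) t := by
      obtain ⟨s, hs⟩ := hi₀mem
      exact ⟨le_csInf ⟨s, hs⟩ (fun b hb => hb.1.1), le_trans (csInf_le (hbdd i₀) hs) hs.1.2⟩
    -- before t₀ all components satisfy the inequality
    have hbefore : ∀ s ∈ Icc (0:ℝ) t, s < t₀ → ∀ j, φ j s ≤ 0 := by
      intro s hs hst j
      by_contra hpos
      push_neg at hpos
      have hsS : s ∈ S j := ⟨hs, hpos⟩
      have : sInf (S i₀) ≤ s := le_trans
        (hi₀min j (by simp only [Finset.mem_filter, Finset.mem_univ, true_and]; exact ⟨s, hsS⟩))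
        (csInf_le (hbdd j) hsS)
      linarith
    -- continuity of φ j at points ≥ 0
    have hcont : ∀ j, ∀ s ≥ (0:ℝ), ContinuousAt (φ j) s := by
      intro j s hs
      have h1 : ContinuousAt (fun u => x u j) s :=
        ((hasDerivAt_pi.1 (hx s hs)) j).continuousAt
      have h2 : ContinuousAt (fun u => y u j) s :=
        ((hasDerivAt_pi.1 (hy s hs)) j).continuousAt
      exact (h1.sub h2).sub (by fun_prop)
    -- φ i₀ t₀ ≥ 0 (t₀ is in the closure of S i₀)
    have ht₀cl : t₀ ∈ closure (S i₀) := csInf_mem_closure hi₀mem (hbdd i₀)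
    have hge : 0 ≤ φ i₀ t₀ := by
      haveI hne : (𝓝[S i₀] t₀).NeBot := mem_closure_iff_nhdsWithin_neBot.1 ht₀cl
      have htend : Tendsto (φ i₀) (𝓝[S i₀] t₀) (𝓝 (φ i₀ t₀)) :=
        ((hcont i₀ t₀ ht₀mem.1).tendsto).mono_left nhdsWithin_le_nhds
      exact ge_of_tendsto htend (eventually_nhdsWithin_of_forall (fun s hs => le_of_lt hs.2))
    -- t₀ > 0
    have ht₀pos : 0 < t₀ := by
      rcases lt_or_eq_of_le ht₀mem.1 with hp | hp
      · exact hp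
      · exfalso
        have h1 : 0 ≤ φ i₀ 0 := by simpa [← hp] using hge
        have h2 := h0 i₀
        simp only [hφ, mul_zero, Real.exp_zero, mul_one] at h1
        linarith
    -- all components ≤ 0 at t₀ (limit from the left)
    have hle : ∀ j, φ j t₀ ≤ 0 := by
      intro j
      have htend : Tendsto (φ j) (𝓝[<] t₀) (𝓝 (φ j t₀)) :=
        ((hcont j t₀ ht₀mem.1).tendsto).mono_left nhdsWithin_le_nhds
      refine le_of_tendsto htend ?_
      filter_upwards [Ioo_mem_nhdsLT_of_mem (⟨ht₀pos, le_refl t₀⟩ : t₀ ∈ Ioc (0:ℝ) t₀)]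
        with s hs
      exact hbefore s ⟨le_of_lt hs.1, le_trans (le_of_lt hs.2) ht₀mem.2⟩ hs.2 j
    have heq : φ i₀ t₀ = 0 := le_antisymm (hle i₀) hge
    -- derivative of φ i₀ at t₀
    set E : ℝ := ε * Real.exp (K * t₀) with hEdef
    have hEpos : 0 < E := by positivity
    have hder : HasDerivAt (φ i₀) (p (x t₀) i₀ - q (y t₀) i₀ - ε * (Real.exp (K * t₀) * K)) t₀ := by
      have h1 : HasDerivAt (fun u => x u i₀) (p (x t₀) i₀) t₀ :=
        (hasDerivAt_pi.1 (hx t₀ ht₀mem.1)) i₀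
      have h2 : HasDerivAt (fun u => y u i₀) (q (y t₀) i₀) t₀ :=
        (hasDerivAt_pi.1 (hy t₀ ht₀mem.1)) i₀
      have h3 : HasDerivAt (fun u => ε * Real.exp (K * u)) (ε * (Real.exp (K * t₀) * K)) t₀ := by
        have := (((hasDerivAt_id t₀).const_mul K).exp).const_mul ε
        simpa [mul_comm] using this
      exact (h1.sub h2).sub h3
    -- the derivative is negative, by the key hypothesis
    have hdneg : p (x t₀) i₀ - q (y t₀) i₀ - ε * (Real.exp (K * t₀) * K) < 0 := by
      have hkey : p (x t₀) i₀ ≤ q (y t₀) i₀ + C * E := by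
        refine key (x t₀) (y t₀) E hEpos ?_ i₀ ?_
        · intro j
          have := hle j
          simp only [hφ] at this
          simp only [hEdef]; linarith
        · have := heq
          simp only [hφ] at this
          simp only [hEdef]; linarith
      have : ε * (Real.exp (K * t₀) * K) = K * E := by ring
      rw [this]
      have : C * E < K * E := by
        apply mul_lt_mul_of_pos_right _ hEpos
        simp [hKdef]
      linarith
    -- but the derivative is ≥ 0 since t₀ is a left max with φ i₀ t₀ = 0
    have hdnonneg : 0 ≤ p (x t₀) i₀ - q (y t₀) i₀ - ε * (Real.exp (K * t₀) * K) := by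
      have hslope := hasDerivAt_iff_tendsto_slope.1 hder
      have hmono : 𝓝[<] t₀ ≤ 𝓝[≠] t₀ :=
        nhdsWithin_mono _ (fun s hs => ne_of_lt hs)
      refine ge_of_tendsto (hslope.mono_left hmono) ?_
      filter_upwards [Ioo_mem_nhdsLT_of_mem (⟨ht₀pos, le_refl t₀⟩ : t₀ ∈ Ioc (0:ℝ) t₀)]
        with s hs
      have hφs : φ i₀ s ≤ 0 :=
        hbefore s ⟨le_of_lt hs.1, le_trans (le_of_lt hs.2) ht₀mem.2⟩ hs.2 i₀
      have : slope (φ i₀) t₀ s = (φ i₀ s - φ i₀ t₀) / (s - t₀) := by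
        simp [slope, vsub_eq_sub, div_eq_inv_mul, mul_comm]
      rw [this, heq]
      rw [div_nonneg_iff]
      right
      constructor <;> simp <;> linarith [hs.2]
    linarith
  -- conclude by letting ε → 0
  have : ∀ δ > (0:ℝ), x t i ≤ y t i + δ := by
    intro δ hδ
    have hEpos : 0 < Real.exp (K * t) := Real.exp_pos _
    have := claim (δ / Real.exp (K * t)) (by positivity) t ⟨ht, le_refl t⟩ i
    rwa [div_mul_cancel₀ _ (ne_of_gt hEpos)] at this
  exact le_of_forall_pos_le_add this

/-- Autonomous comparison principle: if `g ≤ f ≤ r` componentwise, `g` and `r`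
satisfy the Kamke–Müller condition, the vector fields are Lipschitz (ensuring
uniqueness and Lipschitz dependence on initial data), and the solutions are
initially ordered, then they stay ordered for all `t ≥ 0`. -/
theorem autonomous_comparison (n : ℕ)
    (g f r : (Fin n → ℝ) → (Fin n → ℝ))
    (hgf : ∀ x, g x ≤ f x) (hfr : ∀ x, f x ≤ r x)
    (hKMg : ∀ a b : Fin n → ℝ, a ≤ b → ∀ i : Fin n, a i = b i → g a i ≤ g b i)
    (hKMr : ∀ a b : Fin n → ℝ, a ≤ b → ∀ i : Fin n, a i = b i → r a i ≤ r b i)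
    (hLip : ∃ L : NNReal, LipschitzWith L g ∧ LipschitzWith L f ∧ LipschitzWith L r)
    (xg xf xr : ℝ → (Fin n → ℝ))
    (hxg : ∀ t ≥ (0:ℝ), HasDerivAt xg (g (xg t)) t)
    (hxf : ∀ t ≥ (0:ℝ), HasDerivAt xf (f (xf t)) t)
    (hxr : ∀ t ≥ (0:ℝ), HasDerivAt xr (r (xr t)) t)
    (h0 : xg 0 ≤ xf 0 ∧ xf 0 ≤ xr 0) :
    ∀ t ≥ (0:ℝ), xg t ≤ xf t ∧ xf t ≤ xr t := by
  obtain ⟨L, hLg, hLf, hLr⟩ := hLip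
  have hnorm : ∀ (h : (Fin n → ℝ) → (Fin n → ℝ)), LipschitzWith L h →
      ∀ (w : Fin n → ℝ) (ε : ℝ), 0 < ε → ∀ i,
      h (fun j => w j + ε) i ≤ h w i + (L : ℝ) * ε := by
    intro h hL w ε hε i
    have hi : Nonempty (Fin n) := ⟨i⟩
    have h1 : h (fun j => w j + ε) i - h w i ≤ ‖h (fun j => w j + ε) - h w‖ := by
      calc h (fun j => w j + ε) i - h w i ≤ |h (fun j => w j + ε) i - h w i| := le_abs_self _
        _ = ‖(h (fun j => w j + ε) - h w) i‖ := by simp [Real.norm_eq_abs]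
        _ ≤ ‖h (fun j => w j + ε) - h w‖ := norm_le_pi_norm _ i
    have h2 : ‖h (fun j => w j + ε) - h w‖ ≤ (L : ℝ) * ε := by
      have := hL.dist_le_mul (fun j => w j + ε) w
      rw [dist_eq_norm, dist_eq_norm] at this
      have heq : ‖(fun j => w j + ε) - w‖ = ε := by
        have : (fun j => w j + ε) - w = (fun _ : Fin n => ε) := by funext j; simp
        rw [this, pi_norm_const, Real.norm_eq_abs, abs_of_pos hε]
      rw [heq] at this
      exact this
    linarith
  have hgfc : ∀ t ≥ (0:ℝ), xg t ≤ xf t := by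
    refine comparison_aux g f (L : ℝ) L.2 ?_ xg xf hxg hxf h0.1
    intro a w ε hε hab i hi
    have hab' : a ≤ fun j => w j + ε := hab
    calc g a i ≤ g (fun j => w j + ε) i := hKMg a _ hab' i (by simpa using hi)
      _ ≤ g w i + (L : ℝ) * ε := hnorm g hLg w ε hε i
      _ ≤ f w i + (L : ℝ) * ε := by linarith [hgf w i]
  have hfrc : ∀ t ≥ (0:ℝ), xf t ≤ xr t := by
    refine comparison_aux f r (L : ℝ) L.2 ?_ xf xr hxf hxr h0.2
    intro a w ε hε hab i hi
    have hab' : a ≤ fun j => w j + ε := hab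
    calc f a i ≤ r a i := hfr a i
      _ ≤ r (fun j => w j + ε) i := hKMr a _ hab' i (by simpa using hi)
      _ ≤ r w i + (L : ℝ) * ε := hnorm r hLr w ε hε i
  exact fun t ht => ⟨hgfc t ht, hfrc t ht⟩
end
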